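/- Suppose C₁,…,C_n is a chain of rational components connecting two nodes with preimages q and q', carrying marked critical points c₁,…,c_m (at which df has strictly positive vanishing order) and no marked zeros or poles, such that on the chain the orders of df at consecutive node-preimages satisfy the twisted-differential matching condition ord_{p⁺}(df) + ord_{p⁻}(df) = −2 at every internal node, and the degree of the divisor of df on each P¹-component is −2. Then ord_q(df) + ord_{q'}(df) = −2 + Σ_{k=1}^m ord_{c_k}(df) > −2. -/
import Mathlib


/- STATEMENT 14: Let `C₁, …, C_n` (n ≥ 1) be a chain of rational components
connecting two nodes with preimages `q` and `q'`, carrying marked critical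
points `c₁, …, c_m` with strictly positive orders of `df`, and no marked zeros
or poles.  Let `a i`, `b i` be the orders of `df` at the left and right
node-preimages on `C_{i+1}`, and `s i` the total order of `df` at the critical
points on `C_{i+1}`.  Assume: the divisor of `df` on each `ℙ¹`-component has
degree `−2` (`a i + b i + s i = −2`); the matching condition
`ord_{p⁺}(df) + ord_{p⁻}(df) = −2` holds at every internal node
(`b i + a (i+1) = −2`) and at the two outer nodes
(`ordq + a 0 = −2`, `b (n−1) + ordq' = −2`).  Then
`ord_q(df) + ord_{q'}(df) = −2 + ∑ₖ ord_{c_k}(df) > −2`. -/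
theorem stmt_14 (n m : ℕ) (hn : 1 ≤ n) (hm : 1 ≤ m)
    (a b : ℕ → ℤ) (ordq ordq' : ℤ)
    (c : Fin m → ℤ) (comp : Fin m → Fin n)
    (hc : ∀ k, 0 < c k)
    (s : ℕ → ℤ)
    (hs : ∀ i, s i = ∑ k ∈ Finset.univ.filter (fun k => ((comp k : ℕ) = i)), c k)
    (hdeg : ∀ i < n, a i + b i + s i = -2)
    (hmatch : ∀ i, i + 1 < n → b i + a (i + 1) = -2)
    (hq : ordq + a 0 = -2)
    (hq' : b (n - 1) + ordq' = -2) :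
    ordq + ordq' = -2 + ∑ k, c k ∧ -2 < ordq + ordq' := by
  -- total s over range n equals sum of c
  have hS : ∑ i ∈ Finset.range n, s i = ∑ k, c k := by
    simp only [hs]
    rw [← Finset.sum_fiberwise_of_maps_to (g := fun k : Fin m => (comp k : ℕ))
      (fun k _ => Finset.mem_range.mpr (comp k).isLt)]
  -- sum of degree condition
  have h1 : ∑ i ∈ Finset.range n, (a i + b i + s i) = -2 * n := by
    rw [Finset.sum_congr rfl (fun i hi => hdeg i (Finset.mem_range.mp hi))]
    simp [mul_comm]
  have h2 : ∑ i ∈ Finset.range (n - 1), (b i + a (i + 1)) = -2 * (n - 1 : ℕ) := by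
    rw [Finset.sum_congr rfl (fun i hi => hmatch i (by
      have := Finset.mem_range.mp hi; omega))]
    simp [mul_comm]
  -- split the first sum
  obtain ⟨p, rfl⟩ : ∃ p, n = p + 1 := ⟨n - 1, by omega⟩
  have key : a 0 + b p = -2 - ∑ k, c k := by
    have ha : ∑ i ∈ Finset.range (p + 1), a i = a 0 + ∑ i ∈ Finset.range p, a (i + 1) := by
      rw [Finset.sum_range_succ' a p]; ring
    have hb : ∑ i ∈ Finset.range (p + 1), b i = (∑ i ∈ Finset.range p, b i) + b p :=
      Finset.sum_range_succ b p
    simp only [Finset.sum_add_distrib] at h1 h2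
    simp only [Nat.add_sub_cancel] at h2
    rw [hS, ha, hb] at h1
    push_cast at h1 h2 ⊢
    linarith
  have hpos : 0 < ∑ k, c k :=
    Finset.sum_pos (fun k _ => hc k) (Finset.univ_nonempty_iff.mpr ⟨⟨0, hm⟩⟩)
  simp only [Nat.add_sub_cancel] at hq'
  constructor
  · linarith
  · linarith
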